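/- Let A ⊆ ℝ^d be a nonempty finite set with mean μ = (1/|A|)∑_{x∈A} x, and let S ⊆ ℝ^d be a nonempty finite set of centers. Let T ≥ (7/3)·φ_{{μ}}(S) be a threshold and set W = ∑_{y∈A} min{φ_{{y}}(S), T}, assumed positive. Then ∑_{x∈A} (min{φ_{{x}}(S), T}/W) · φ_A(S ∪ {x}) ≤ 64·φ_A({μ}); i.e., if a point x is sampled from A with probability proportional to the thresholded value min{φ_{{x}}(S), T}, the expected cost of A after adding x as a center is at most 64·φ_A({μ}). -/

import Mathlib

open Finset

open scoped Classical

/-- `phiPt x S` is the squared distance from `x` to its nearest center in `S`,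
i.e. `min_{s ∈ S} ‖x - s‖²`. -/
noncomputable def phiPt {d : ℕ} (x : EuclideanSpace ℝ (Fin d))
    (S : Finset (EuclideanSpace ℝ (Fin d))) : ℝ :=
  sInf ((fun s => ‖x - s‖ ^ 2) '' (S : Set (EuclideanSpace ℝ (Fin d))))

/-- `phi A S = ∑_{x ∈ A} min_{s ∈ S} ‖x - s‖²`, the `k`-means cost of centers `S` on `A`. -/
noncomputable def phi {d : ℕ} (A S : Finset (EuclideanSpace ℝ (Fin d))) : ℝ :=
  ∑ x ∈ A, phiPt x S

/-- The mean (centroid) of a finite set of points. -/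
noncomputable def mean {d : ℕ} (A : Finset (EuclideanSpace ℝ (Fin d))) :
    EuclideanSpace ℝ (Fin d) :=
  (A.card : ℝ)⁻¹ • ∑ x ∈ A, x

/-- `rho X S z` is the cost of the centers `S` on `X` after discarding the `z`
points of `X` farthest from `S`: the minimum of `phi Y S` over `Y ⊆ X` with
`|Y| = |X| - z`. -/
noncomputable def rho {d : ℕ} (X S : Finset (EuclideanSpace ℝ (Fin d))) (z : ℕ) : ℝ :=
  sInf ((fun Y : Finset (EuclideanSpace ℝ (Fin d)) => phi Y S) ''
    {Y : Finset (EuclideanSpace ℝ (Fin d)) | Y ⊆ X ∧ Y.card = X.card - z})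

/-
Fix any point `c` (the theorem takes `c = μ`) and write `m = φ_{{c}}(S)`, `r_x = ‖x - c‖²`,
`Δ = ∑_x r_x`, `w_x = min{φ_{{x}}(S), T}` and `W = ∑_x w_x`. Since `‖y - x‖² ≤ 2 r_y + 2 r_x`,
adding `x` as a center gives `φ_A(S ∪ {x}) ≤ 2Δ + g_x` with `g_x = ∑_y min{φ_{{y}}(S), 2 r_x}`.
If `T ≤ 2 r_x`, comparing the two thresholds gives `T g_x ≤ 2 r_x W`; otherwise
`g_x ≤ min{W, 2n r_x}` and `w_x ≤ φ_{{x}}(S) ≤ 2m + 2 r_x`. Either way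
`w_x g_x ≤ 2 r_x W + 2m·min{W, 2n r_x}`. Summing over `x` and using `n m ≤ 2W + 2Δ`
(valid once `T ≥ m/2`) yields `∑_x w_x φ_A(S ∪ {x}) ≤ 16 Δ W`.
-/

theorem norm_sub_sq_le_two_mul_add {E : Type*} [SeminormedAddCommGroup E] (a b c : E) :
    ‖a - c‖ ^ 2 ≤ 2 * ‖a - b‖ ^ 2 + 2 * ‖b - c‖ ^ 2 := by
  calc ‖a - c‖ ^ 2 ≤ (‖a - b‖ + ‖b - c‖) ^ 2 := by
        gcongr; exact norm_sub_le_norm_sub_add_norm_sub a b c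
    _ ≤ 2 * ‖a - b‖ ^ 2 + 2 * ‖b - c‖ ^ 2 := by
      linarith [add_sq_le (a := ‖a - b‖) (b := ‖b - c‖)]

section OrderedRing

variable {α : Type*} [CommRing α] [LinearOrder α] [IsStrictOrderedRing α]

theorem mul_min_le_mul_min_of_le {a t c : α} (ha : 0 ≤ a) (ht : 0 ≤ t) (htc : t ≤ c) :
    t * min a c ≤ c * min a t := by
  rcases le_total a t with hat | hta
  · rw [min_eq_left hat, min_eq_left (hat.trans htc)]
    exact mul_le_mul_of_nonneg_right htc ha
  · rw [min_eq_right hta, mul_comm c]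
    exact mul_le_mul_of_nonneg_left (min_le_right a c) ht

theorem min_two_mul_mul_two_mul_add_le {w δ : α} (hw : 0 ≤ w) (hδ : 0 ≤ δ) :
    min w (2 * δ) * (2 * w + 2 * δ) ≤ 6 * δ * w := by
  rcases le_total w (2 * δ) with h | h
  · rw [min_eq_left h]; nlinarith
  · rw [min_eq_right h]; nlinarith

end OrderedRing

section Cost

variable {d : ℕ} {x y c s : EuclideanSpace ℝ (Fin d)} {A S : Finset (EuclideanSpace ℝ (Fin d))}
  {T : ℝ}

theorem phiPt_nonneg (x : EuclideanSpace ℝ (Fin d)) (S : Finset (EuclideanSpace ℝ (Fin d))) :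
    0 ≤ phiPt x S :=
  Real.sInf_nonneg <| by rintro r ⟨s, -, rfl⟩; positivity

theorem phiPt_le_of_mem (hs : s ∈ S) : phiPt x S ≤ ‖x - s‖ ^ 2 :=
  csInf_le ⟨0, by rintro r ⟨t, -, rfl⟩; positivity⟩ ⟨s, hs, rfl⟩

theorem exists_mem_phiPt_eq (hS : S.Nonempty) : ∃ s ∈ S, phiPt x S = ‖x - s‖ ^ 2 := by
  obtain ⟨s, hs, hmin⟩ :=
    ((coe_nonempty.mpr hS).image fun s => ‖x - s‖ ^ 2).csInf_mem (S.finite_toSet.image _)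
  exact ⟨s, hs, hmin.symm⟩

theorem phiPt_singleton (x c : EuclideanSpace ℝ (Fin d)) : phiPt x {c} = ‖x - c‖ ^ 2 := by
  simp [phiPt]

theorem phi_singleton (A : Finset (EuclideanSpace ℝ (Fin d))) (c : EuclideanSpace ℝ (Fin d)) :
    phi A {c} = ∑ x ∈ A, ‖x - c‖ ^ 2 :=
  sum_congr rfl fun x _ => phiPt_singleton x c

theorem phi_nonneg (A S : Finset (EuclideanSpace ℝ (Fin d))) : 0 ≤ phi A S :=
  sum_nonneg fun x _ => phiPt_nonneg x S

theorem phiPt_le_two_mul_add (hS : S.Nonempty) (x y : EuclideanSpace ℝ (Fin d)) :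
    phiPt x S ≤ 2 * phiPt y S + 2 * ‖x - y‖ ^ 2 := by
  obtain ⟨s, hs, hys⟩ := exists_mem_phiPt_eq (x := y) hS
  have := norm_sub_sq_le_two_mul_add x y s
  linarith [phiPt_le_of_mem (x := x) hs]

theorem phiPt_insert_le (hS : S.Nonempty) :
    phiPt y (insert x S) ≤ min (phiPt y S) (‖y - x‖ ^ 2) := by
  obtain ⟨s, hs, hys⟩ := exists_mem_phiPt_eq (x := y) hS
  exact le_min (hys ▸ phiPt_le_of_mem (mem_insert_of_mem hs))
    (phiPt_le_of_mem (mem_insert_self x S))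

theorem phi_insert_le (hS : S.Nonempty) (c x : EuclideanSpace ℝ (Fin d)) :
    phi A (insert x S) ≤ 2 * phi A {c} + ∑ y ∈ A, min (phiPt y S) (2 * ‖x - c‖ ^ 2) := by
  rw [phi_singleton, mul_sum, ← sum_add_distrib]
  refine sum_le_sum fun y _ => (phiPt_insert_le hS).trans ?_
  calc min (phiPt y S) (‖y - x‖ ^ 2)
      ≤ min (2 * ‖y - c‖ ^ 2 + phiPt y S) (2 * ‖y - c‖ ^ 2 + 2 * ‖x - c‖ ^ 2) := by
        gcongr
        · exact le_add_of_nonneg_left (by positivity)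
        · simpa [norm_sub_rev x c] using norm_sub_sq_le_two_mul_add y c x
    _ = 2 * ‖y - c‖ ^ 2 + min (phiPt y S) (2 * ‖x - c‖ ^ 2) := min_add_add_left _ _ _

theorem card_mul_phiPt_le (hS : S.Nonempty) (hT : phiPt c S / 2 ≤ T) :
    A.card * phiPt c S ≤ 2 * ∑ y ∈ A, min (phiPt y S) T + 2 * phi A {c} := by
  have hpt : ∀ y ∈ A, phiPt c S / 2 - ‖y - c‖ ^ 2 ≤ min (phiPt y S) T := fun y _ => by
    have := phiPt_le_two_mul_add hS c y
    rw [norm_sub_rev] at this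
    exact le_min (by linarith) (by linarith [sq_nonneg ‖y - c‖])
  have := sum_le_sum hpt
  rw [sum_sub_distrib, sum_const, nsmul_eq_mul] at this
  rw [phi_singleton]
  linarith

theorem min_phiPt_mul_sum_min_le (hS : S.Nonempty) (hT : 0 ≤ T)
    (x c : EuclideanSpace ℝ (Fin d)) :
    min (phiPt x S) T * ∑ y ∈ A, min (phiPt y S) (2 * ‖x - c‖ ^ 2)
      ≤ 2 * ‖x - c‖ ^ 2 * ∑ y ∈ A, min (phiPt y S) T
        + 2 * phiPt c S * min (∑ y ∈ A, min (phiPt y S) T) (2 * A.card * ‖x - c‖ ^ 2) := by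
  set r := ‖x - c‖ ^ 2
  set W := ∑ y ∈ A, min (phiPt y S) T
  set g := ∑ y ∈ A, min (phiPt y S) (2 * r)
  have hr : 0 ≤ r := by positivity
  have hg : 0 ≤ g := sum_nonneg fun y _ => le_min (phiPt_nonneg y S) (by positivity)
  have hW : 0 ≤ W := sum_nonneg fun y _ => le_min (phiPt_nonneg y S) hT
  have hm : 0 ≤ phiPt c S := phiPt_nonneg c S
  rcases le_or_gt T (2 * r) with hTr | hrT
  · have hTg : T * g ≤ 2 * r * W := by
      rw [mul_sum, mul_sum]
      exact sum_le_sum fun y _ => mul_min_le_mul_min_of_le (phiPt_nonneg y S) hT hTr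
    have hwg : min (phiPt x S) T * g ≤ T * g := mul_le_mul_of_nonneg_right (min_le_right _ _) hg
    have : 0 ≤ 2 * phiPt c S * min W (2 * A.card * r) :=
      mul_nonneg (by linarith) (le_min hW (by positivity))
    linarith
  · have hgW : g ≤ W := sum_le_sum fun y _ => min_le_min_left _ hrT.le
    have hgn : g ≤ 2 * A.card * r := by
      have := sum_le_card_nsmul A _ (2 * r) fun y _ => min_le_right (phiPt y S) (2 * r)
      rw [nsmul_eq_mul] at this
      linarith
    have hwx : min (phiPt x S) T ≤ 2 * phiPt c S + 2 * r :=
      (min_le_left _ _).trans (phiPt_le_two_mul_add hS x c)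
    calc min (phiPt x S) T * g ≤ (2 * phiPt c S + 2 * r) * g :=
          mul_le_mul_of_nonneg_right hwx hg
      _ = 2 * r * g + 2 * phiPt c S * g := by ring
      _ ≤ 2 * r * W + 2 * phiPt c S * min W (2 * A.card * r) :=
        add_le_add (mul_le_mul_of_nonneg_left hgW (by linarith))
          (mul_le_mul_of_nonneg_left (le_min hgW hgn) (by linarith))

theorem sum_min_phiPt_mul_phi_insert_le (hS : S.Nonempty) (c : EuclideanSpace ℝ (Fin d))
    (hT : phiPt c S / 2 ≤ T) :
    ∑ x ∈ A, min (phiPt x S) T * phi A (insert x S)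
      ≤ 16 * phi A {c} * ∑ y ∈ A, min (phiPt y S) T := by
  set W := ∑ y ∈ A, min (phiPt y S) T
  set Δ := phi A {c} with hΔ_def
  set m := phiPt c S
  have hm : 0 ≤ m := phiPt_nonneg c S
  have hT₀ : 0 ≤ T := by linarith
  have hW : 0 ≤ W := sum_nonneg fun y _ => le_min (phiPt_nonneg y S) hT₀
  have hΔ : 0 ≤ Δ := phi_nonneg A {c}
  have hpoint : ∀ x ∈ A, min (phiPt x S) T * phi A (insert x S)
      ≤ 2 * Δ * min (phiPt x S) T + 2 * ‖x - c‖ ^ 2 * W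
        + 2 * m * min W (2 * A.card * ‖x - c‖ ^ 2) := fun x _ => by
    have := mul_le_mul_of_nonneg_left (phi_insert_le (A := A) hS c x)
      (le_min (phiPt_nonneg x S) hT₀)
    linarith [min_phiPt_mul_sum_min_le (A := A) hS hT₀ x c]
  have hmins : ∑ x ∈ A, min W (2 * A.card * ‖x - c‖ ^ 2) ≤ A.card * min W (2 * Δ) := by
    rw [mul_min_of_nonneg _ _ (Nat.cast_nonneg _)]
    refine le_min ?_ ?_
    · simpa using sum_le_card_nsmul A _ W fun x _ => min_le_left W (2 * A.card * ‖x - c‖ ^ 2)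
    · rw [hΔ_def, phi_singleton, mul_sum, mul_sum]
      exact sum_le_sum fun x _ => (min_le_right _ _).trans_eq (by ring)
  have hcard : A.card * m ≤ 2 * W + 2 * Δ := card_mul_phiPt_le hS hT
  have hmin : min W (2 * Δ) * (A.card * m) ≤ 6 * Δ * W :=
    (mul_le_mul_of_nonneg_left hcard (le_min hW (by linarith))).trans
      (min_two_mul_mul_two_mul_add_le hW hΔ)
  calc ∑ x ∈ A, min (phiPt x S) T * phi A (insert x S)
      ≤ ∑ x ∈ A, (2 * Δ * min (phiPt x S) T + 2 * ‖x - c‖ ^ 2 * W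
        + 2 * m * min W (2 * A.card * ‖x - c‖ ^ 2)) := sum_le_sum hpoint
    _ = 2 * Δ * W + 2 * Δ * W + 2 * m * ∑ x ∈ A, min W (2 * A.card * ‖x - c‖ ^ 2) := by
      rw [sum_add_distrib, sum_add_distrib, ← mul_sum, ← mul_sum, ← sum_mul, ← mul_sum,
        ← phi_singleton]
    _ ≤ 2 * Δ * W + 2 * Δ * W + 2 * m * (A.card * min W (2 * Δ)) := by gcongr
    _ ≤ 16 * Δ * W := by linarith

end Cost

theorem stmt12_general {d : ℕ} (A S : Finset (EuclideanSpace ℝ (Fin d)))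
    (hS : S.Nonempty)
    (T : ℝ) (hT : T ≥ (7 / 3) * phiPt (mean A) S)
    (hW : 0 < ∑ y ∈ A, min (phiPt y S) T) :
    ∑ x ∈ A, (min (phiPt x S) T / (∑ y ∈ A, min (phiPt y S) T)) * phi A (insert x S)
      ≤ 64 * phi A {mean A} := by
  have hm := phiPt_nonneg (mean A) S
  have hsum := sum_min_phiPt_mul_phi_insert_le (A := A) hS (mean A) (T := T) (by linarith)
  simp_rw [div_mul_eq_mul_div, ← sum_div]
  rw [div_le_iff₀ hW]
  linarith [mul_nonneg (phi_nonneg A {mean A}) hW.le]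

/-- If a point `x` is sampled from `A` with probability proportional to
the thresholded value `min{φ_{{x}}(S), T}` where `T ≥ (7/3)·φ_{{μ}}(S)`, the expected cost
of `A` after adding `x` as a center is at most `64·φ_A({μ})`. -/
theorem stmt12 {d : ℕ} (A S : Finset (EuclideanSpace ℝ (Fin d)))
    (hA : A.Nonempty) (hS : S.Nonempty)
    (T : ℝ) (hT : T ≥ (7 / 3) * phiPt (mean A) S)
    (hW : 0 < ∑ y ∈ A, min (phiPt y S) T) :
    ∑ x ∈ A, (min (phiPt x S) T / (∑ y ∈ A, min (phiPt y S) T)) * phi A (insert x S)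
      ≤ 64 * phi A {mean A} :=
  stmt12_general A S hS T hT hW
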